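/- arXiv:2002.09233 — 3 statements merged into one kernel-verified Lean document; each statement's English description precedes it below -/
import Mathlib

section
/- Let $X$ be a max-linear Bayesian network: $X_i=\bigvee_{j\in\mathrm{pa}(i)}c_{ij}X_j\vee Z_i$ over a DAG with independent atom-free positive innovations $Z$, so that $X=C^\ast\odot Z$. With probability one, the random impact graph $G(Z)$ on $V$ (with edge $j\to i$ iff $X_i=c^\ast_{ij}Z_j$) is a forest in which every node has at most one parent. -/
open scoped NNReal

noncomputable section

open MeasureTheory ProbabilityTheory

/-- Max-times matrix-vector product: `(A ⊙ x) i = max_j (A i j * x j)`. -/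
def maxMul {d : ℕ} (A : Matrix (Fin d) (Fin d) ℝ≥0) (x : Fin d → ℝ≥0) : Fin d → ℝ≥0 :=
  fun i => Finset.univ.sup fun j => A i j * x j

/-- Max-times matrix product. -/
def maxMatMul {d : ℕ} (A B : Matrix (Fin d) (Fin d) ℝ≥0) : Matrix (Fin d) (Fin d) ℝ≥0 :=
  Matrix.of fun i j => Finset.univ.sup fun l => A i l * B l j

/-- Max-times matrix powers, with `A^{⊙0}` the identity matrix. -/
def maxPow {d : ℕ} (A : Matrix (Fin d) (Fin d) ℝ≥0) : ℕ → Matrix (Fin d) (Fin d) ℝ≥0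
  | 0 => Matrix.of fun i j => if i = j then 1 else 0
  | k + 1 => maxMatMul A (maxPow A k)

/-- Kleene star `C^* = I ∨ C ∨ C^{⊙2} ∨ ⋯ ∨ C^{⊙(d-1)}` over the max-times semiring. -/
def kleene {d : ℕ} (C : Matrix (Fin d) (Fin d) ℝ≥0) : Matrix (Fin d) (Fin d) ℝ≥0 :=
  Matrix.of fun i j => (Finset.range d).sup fun k => maxPow C k i j

/-- The support digraph of `C` (edge `j → i` iff `C i j ≠ 0`) has no directed cycle. -/
def SupportAcyclic {d : ℕ} (C : Matrix (Fin d) (Fin d) ℝ≥0) : Prop :=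
  ¬ ∃ (r : ℕ) (c : Fin (r + 1) → Fin d), Function.Injective c ∧ ∀ t, C (c (t + 1)) (c t) ≠ 0

/-- Edge `j → i` of the impact graph of the innovation vector `z`:
`i ≠ j` and `X i = c^*_{ij} * z j`, where `X = C^* ⊙ z`. -/
def impactEdge {d : ℕ} (C : Matrix (Fin d) (Fin d) ℝ≥0) (z : Fin d → ℝ≥0) (i j : Fin d) : Prop :=
  i ≠ j ∧ maxMul (kleene C) z i = kleene C i j * z j

/-!
Almost surely the weighted innovations `c*_ij Z_j` (over `j` with `c*_ij ≠ 0`) are pairwise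
distinct, since two independent variables one of which is atom-free coincide with probability
zero; the maximum defining `X_i` is then attained by a single `j`. An impact edge `j → i` forces
`c*_ij ≠ 0` because `X_i > 0`, hence a directed path `j → ⋯ → i` in the DAG, so a cycle of the
impact graph would give a closed walk, and therefore a cycle, in the DAG.
-/

open Relation

section Cycles

variable {α : Type*} {r : α → α → Prop}

theorem exists_walk_of_transGen {a b : α} (h : TransGen r a b) :
    ∃ n, 0 < n ∧ ∃ p : ℕ → α, p 0 = a ∧ p n = b ∧ ∀ t < n, r (p t) (p (t + 1)) := by
  induction h with
  | @single c hac =>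
    refine ⟨1, one_pos, fun t => if t = 0 then a else c, rfl, rfl, ?_⟩
    intro t ht
    obtain rfl : t = 0 := by omega
    exact hac
  | @tail b c _ hbc ih =>
    obtain ⟨n, hn, p, hp0, hpn, hp⟩ := ih
    refine ⟨n + 1, n.succ_pos, fun s => if s = n + 1 then c else p s, by simpa using hp0,
      by simp, fun t ht => ?_⟩
    rcases Nat.lt_succ_iff_lt_or_eq.mp ht with ht | rfl
    · simpa [ht.ne, show t ≠ n + 1 by omega] using hp t ht
    · simpa [hpn] using hbc

theorem exists_injective_cycle_of_closed_walk_injOn {n : ℕ} (hn : 0 < n) {p : ℕ → α}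
    (hclosed : p 0 = p n) (hp : ∀ t < n, r (p t) (p (t + 1))) (hinj : Set.InjOn p (Set.Iio n)) :
    ∃ (m : ℕ) (c : Fin (m + 1) → α), Function.Injective c ∧ ∀ t, r (c t) (c (t + 1)) := by
  obtain ⟨m, rfl⟩ : ∃ m, n = m + 1 := ⟨n - 1, by omega⟩
  refine ⟨m, fun t => p t, fun s t hst => Fin.ext (hinj s.isLt t.isLt hst), fun t => ?_⟩
  have hwrap : p ((t + 1 : Fin (m + 1)) : ℕ) = p (t + 1) := by
    rw [Fin.val_add_one]
    split_ifs with ht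
    · simp [hclosed, ht]
    · rfl
  simpa only [hwrap] using hp t t.isLt

theorem exists_injective_cycle_of_closed_walk {n : ℕ} (hn : 0 < n) {p : ℕ → α}
    (hclosed : p 0 = p n) (hp : ∀ t < n, r (p t) (p (t + 1))) :
    ∃ (m : ℕ) (c : Fin (m + 1) → α), Function.Injective c ∧ ∀ t, r (c t) (c (t + 1)) := by
  induction n using Nat.strong_induction_on generalizing p with
  | _ n ih =>
    by_cases hinj : Set.InjOn p (Set.Iio n)
    · exact exists_injective_cycle_of_closed_walk_injOn hn hclosed hp hinj
    have shortcut : ∀ a b, a < b → b < n → p a = p b →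
        ∃ (m : ℕ) (c : Fin (m + 1) → α), Function.Injective c ∧ ∀ t, r (c t) (c (t + 1)) := by
      intro a b hab hbn heq
      refine ih (b - a) (by omega) (by omega) (p := fun t => p (a + t)) ?_ fun t ht => ?_
      · simpa [Nat.add_sub_cancel' hab.le] using heq
      · simpa only [← add_assoc] using hp (a + t) (by omega)
    simp only [Set.InjOn, Set.mem_Iio, not_forall] at hinj
    obtain ⟨a, ha, b, hb, heq, hne⟩ := hinj
    rcases lt_or_gt_of_ne hne with hab | hba
    · exact shortcut a b hab hb heq
    · exact shortcut b a hba ha heq.symm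

theorem exists_injective_cycle_of_transGen_self {x : α} (h : TransGen r x x) :
    ∃ (m : ℕ) (c : Fin (m + 1) → α), Function.Injective c ∧ ∀ t, r (c t) (c (t + 1)) := by
  obtain ⟨n, hn, p, hp0, hpn, hp⟩ := exists_walk_of_transGen h
  exact exists_injective_cycle_of_closed_walk hn (hp0.trans hpn.symm) hp

theorem transGen_self_of_cycle {m : ℕ} {c : Fin (m + 1) → α}
    (hc : ∀ t, TransGen r (c t) (c (t + 1))) : TransGen r (c 0) (c 0) := by
  have hreach : ∀ t : Fin (m + 1), TransGen r (c 0) (c (t + 1)) := by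
    intro t
    induction t using Fin.induction with
    | zero => exact hc 0
    | succ t ih =>
      rw [← Fin.coeSucc_eq_succ]
      exact ih.trans (hc _)
  simpa using hreach (Fin.last m)

end Cycles

section MaxTimes

variable {d : ℕ}

/-- `SupportEdge C j i` is the edge `j → i` of the support digraph of `C`. -/
def SupportEdge (C : Matrix (Fin d) (Fin d) ℝ≥0) (j i : Fin d) : Prop :=
  C i j ≠ 0

theorem SupportAcyclic.not_transGen_self {C : Matrix (Fin d) (Fin d) ℝ≥0} (hC : SupportAcyclic C)
    (x : Fin d) : ¬ TransGen (SupportEdge C) x x := fun h =>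
  hC (exists_injective_cycle_of_transGen_self h)

theorem reflTransGen_of_maxPow_ne_zero (C : Matrix (Fin d) (Fin d) ℝ≥0) (k : ℕ) {i j : Fin d}
    (h : maxPow C k i j ≠ 0) : ReflTransGen (SupportEdge C) j i := by
  induction k generalizing i with
  | zero =>
    obtain rfl : i = j := by
      by_contra hij
      simp [maxPow, hij] at h
    exact ReflTransGen.refl
  | succ k ih =>
    simp only [maxPow, maxMatMul, Matrix.of_apply, ← pos_iff_ne_zero, Finset.lt_sup_iff,
      Finset.mem_univ, true_and, CanonicallyOrderedAdd.mul_pos] at h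
    obtain ⟨l, hil, hlj⟩ := h
    exact (ih hlj.ne').tail hil.ne'

theorem transGen_of_kleene_ne_zero (C : Matrix (Fin d) (Fin d) ℝ≥0) {i j : Fin d}
    (h : kleene C i j ≠ 0) (hij : i ≠ j) : TransGen (SupportEdge C) j i := by
  simp only [kleene, Matrix.of_apply, ← pos_iff_ne_zero, Finset.lt_sup_iff] at h
  obtain ⟨k, -, hk⟩ := h
  exact (reflTransGen_iff_eq_or_transGen.mp
    (reflTransGen_of_maxPow_ne_zero C k hk.ne')).resolve_left hij

theorem one_le_kleene_apply_self (C : Matrix (Fin d) (Fin d) ℝ≥0) (i : Fin d) :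
    1 ≤ kleene C i i := by
  have h0 : 0 ∈ Finset.range d := Finset.mem_range.2 i.pos
  simpa [kleene, maxPow] using Finset.le_sup (f := fun k => maxPow C k i i) h0

theorem mul_le_maxMul (A : Matrix (Fin d) (Fin d) ℝ≥0) (x : Fin d → ℝ≥0) (i j : Fin d) :
    A i j * x j ≤ maxMul A x i :=
  Finset.le_sup (f := fun j => A i j * x j) (Finset.mem_univ j)

theorem maxMul_kleene_pos (C : Matrix (Fin d) (Fin d) ℝ≥0) {z : Fin d → ℝ≥0}
    (hz : ∀ j, 0 < z j) (i : Fin d) : 0 < maxMul (kleene C) z i :=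
  (mul_pos (one_pos.trans_le (one_le_kleene_apply_self C i)) (hz i)).trans_le
    (mul_le_maxMul _ z i i)

end MaxTimes

section ImpactGraph

variable {d : ℕ} {C : Matrix (Fin d) (Fin d) ℝ≥0} {z : Fin d → ℝ≥0}

theorem kleene_ne_zero_of_impactEdge (hz : ∀ j, 0 < z j) {i j : Fin d}
    (h : impactEdge C z i j) : kleene C i j ≠ 0 := by
  intro h0
  have hpos := maxMul_kleene_pos C hz i
  rw [h.2, h0, zero_mul] at hpos
  exact hpos.false

theorem impactEdge_unique (hz : ∀ j, 0 < z j)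
    (hgen : ∀ i j j', j ≠ j' → kleene C i j' ≠ 0 → kleene C i j * z j ≠ kleene C i j' * z j')
    {i j j' : Fin d} (h : impactEdge C z i j) (h' : impactEdge C z i j') : j = j' := by
  by_contra hne
  exact hgen i j j' hne (kleene_ne_zero_of_impactEdge hz h') (h.2.symm.trans h'.2)

theorem SupportAcyclic.not_exists_impactEdge_cycle (hC : SupportAcyclic C) (hz : ∀ j, 0 < z j) :
    ¬ ∃ (r : ℕ) (c : Fin (r + 1) → Fin d), Function.Injective c ∧
      ∀ t, impactEdge C z (c (t + 1)) (c t) := by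
  rintro ⟨r, c, -, hc⟩
  refine hC.not_transGen_self (c 0) (transGen_self_of_cycle fun t => ?_)
  exact transGen_of_kleene_ne_zero C (kleene_ne_zero_of_impactEdge hz (hc t)) (hc t).1

end ImpactGraph

section Probability

variable {Ω : Type*} [MeasurableSpace Ω] {μ : Measure Ω}

theorem measure_eq_eq_zero_of_indepFun {β : Type*} [MeasurableSpace β] [MeasurableEq β]
    [IsFiniteMeasure μ] {W Y : Ω → β} (hW : Measurable W) (hY : Measurable Y)
    (hind : IndepFun W Y μ) (hY_atom : ∀ c, μ {ω | Y ω = c} = 0) :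
    μ {ω | W ω = Y ω} = 0 := by
  have hD : MeasurableSet {p : β × β | p.1 = p.2} := measurableSet_diagonal
  change μ ((fun ω => (W ω, Y ω)) ⁻¹' {p : β × β | p.1 = p.2}) = 0
  rw [← Measure.map_apply (hW.prodMk hY) hD,
    (indepFun_iff_map_prod_eq_prod_map_map hW.aemeasurable hY.aemeasurable).mp hind,
    Measure.prod_apply hD]
  have hslice : ∀ x : β, (μ.map Y) (Prod.mk x ⁻¹' {p : β × β | p.1 = p.2}) = 0 := by
    intro x
    have hxs : Prod.mk x ⁻¹' {p : β × β | p.1 = p.2} = {x} := by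
      ext y
      simp [eq_comm]
    rw [hxs, Measure.map_apply hY (measurableSet_singleton x)]
    exact hY_atom x
  simp only [hslice, lintegral_zero]

theorem ae_mul_ne_mul_of_iIndepFun {ι : Type*} [IsFiniteMeasure μ] {Z : ι → Ω → ℝ≥0}
    (hmeas : ∀ i, Measurable (Z i)) (hindep : iIndepFun Z μ)
    (hatom : ∀ i (c : ℝ≥0), μ {ω | Z i ω = c} = 0) {j j' : ι} (hjj : j ≠ j') (a : ℝ≥0)
    {b : ℝ≥0} (hb : b ≠ 0) : ∀ᵐ ω ∂μ, a * Z j ω ≠ b * Z j' ω := by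
  have hset : {ω | a * Z j ω = b * Z j' ω} = {ω | a / b * Z j ω = Z j' ω} := by
    ext ω
    simp only [Set.mem_ofPred_eq, div_mul_eq_mul_div, div_eq_iff hb, mul_comm b]
  have hnull : μ {ω | a * Z j ω = b * Z j' ω} = 0 := by
    rw [hset]
    exact measure_eq_eq_zero_of_indepFun ((hmeas j).const_mul _) (hmeas j')
      ((hindep.indepFun hjj).comp (measurable_const_mul _) measurable_id) (hatom j')
  exact measure_eq_zero_iff_ae_notMem.mp hnull

end Probability

/-- In a max-linear Bayesian network with independent positive atom-free innovations,
the impact graph is almost surely a forest in which every node has at most one parent. -/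
theorem stmt6 {d : ℕ} (C : Matrix (Fin d) (Fin d) ℝ≥0) (hC : SupportAcyclic C)
    {Ω : Type*} [MeasurableSpace Ω] (μ : Measure Ω) [IsProbabilityMeasure μ]
    (Z : Fin d → Ω → ℝ≥0) (hmeas : ∀ i, Measurable (Z i))
    (hindep : iIndepFun Z μ)
    (hpos : ∀ i ω, 0 < Z i ω)
    (hatom : ∀ i (c : ℝ≥0), μ {ω | Z i ω = c} = 0) :
    ∀ᵐ ω ∂μ,
      (∀ i j j', impactEdge C (fun k => Z k ω) i j → impactEdge C (fun k => Z k ω) i j' →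
        j = j') ∧
      ¬ ∃ (r : ℕ) (c : Fin (r + 1) → Fin d), Function.Injective c ∧
        ∀ t, impactEdge C (fun k => Z k ω) (c (t + 1)) (c t) := by
  have hgeneric : ∀ᵐ ω ∂μ, ∀ i j j', j ≠ j' → kleene C i j' ≠ 0 →
      kleene C i j * Z j ω ≠ kleene C i j' * Z j' ω := by
    simp only [ae_all_iff, Filter.eventually_imp_distrib_left]
    exact fun i j j' hjj hk => ae_mul_ne_mul_of_iIndepFun hmeas hindep hatom hjj _ hk
  filter_upwards [hgeneric] with ω hω
  exact ⟨fun i j j' => impactEdge_unique (hpos · ω) hω,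
    hC.not_exists_impactEdge_cycle (hpos · ω)⟩

end
end

section
/- Let $g$ be an impact graph with positive probability for a max-linear Bayesian network, with root set $R$ and impact exchange matrix $M$. Then for every innovation vector $z$ in the event $\{G(z)=g\}$, the restriction $z_R=(z_r)_{r\in R}$ satisfies $M\odot z_R \le z_R$ entrywise. -/
open scoped NNReal

noncomputable section

open MeasureTheory ProbabilityTheory

open Classical in
/-- The impact exchange matrix `M(g, C^*)` of a graph `g` (edge `j → i` encoded as `g i j`),
defined on the root set of `g` and padded by zeros elsewhere:
`m_{r r'} = max_{i ∈ ch_g(r)} Cs i r' / Cs i r` for distinct roots `r ≠ r'`. -/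
noncomputable def exchangeMatrix {d : ℕ} (Cs : Matrix (Fin d) (Fin d) ℝ≥0)
    (g : Fin d → Fin d → Prop) : Matrix (Fin d) (Fin d) ℝ≥0 :=
  Matrix.of fun r r' =>
    if r ≠ r' ∧ (∀ j, ¬ g r j) ∧ (∀ j, ¬ g r' j) then
      Finset.univ.sup fun i => if g i r then Cs i r' / Cs i r else 0
    else 0

/-! On `{G = g}`, a child `i` of the root `r` satisfies `c*_{ir'} z_{r'} ≤ X_i = c*_{ir} z_r` for
every `r'`, so each ratio `c*_{ir'} / c*_{ir}` defining `m_{rr'}` is at most `z_r / z_{r'}`. -/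

theorem maxMul_apply_le_iff {d : ℕ} {A : Matrix (Fin d) (Fin d) ℝ≥0} {x : Fin d → ℝ≥0}
    {i : Fin d} {b : ℝ≥0} : maxMul A x i ≤ b ↔ ∀ j, A i j * x j ≤ b :=
  Finset.sup_le_iff.trans <| by simp only [Finset.mem_univ, true_implies]

theorem mul_le_maxMul_apply {d : ℕ} (A : Matrix (Fin d) (Fin d) ℝ≥0) (x : Fin d → ℝ≥0)
    (i j : Fin d) : A i j * x j ≤ maxMul A x i :=
  Finset.le_sup (f := fun j => A i j * x j) (Finset.mem_univ j)

theorem impactEdge.mul_le {d : ℕ} {C : Matrix (Fin d) (Fin d) ℝ≥0} {z : Fin d → ℝ≥0}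
    {i j : Fin d} (h : impactEdge C z i j) (k : Fin d) :
    kleene C i k * z k ≤ kleene C i j * z j :=
  h.2 ▸ mul_le_maxMul_apply (kleene C) z i k

-- For `b = 0` the quotient is the junk value `0`, so no positivity is needed.
theorem NNReal.div_mul_le_of_mul_le_mul {a b x y : ℝ≥0} (h : a * x ≤ b * y) :
    a / b * x ≤ y := by
  rcases eq_or_ne b 0 with rfl | hb
  · simp
  · rw [div_mul_eq_mul_div, div_le_iff₀ (pos_iff_ne_zero.mpr hb), mul_comm y]
    exact h

theorem exchangeMatrix_mul_le {d : ℕ} {Cs : Matrix (Fin d) (Fin d) ℝ≥0}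
    {g : Fin d → Fin d → Prop} {z : Fin d → ℝ≥0} {r r' : Fin d}
    (h : ∀ i, g i r → Cs i r' * z r' ≤ Cs i r * z r) :
    exchangeMatrix Cs g r r' * z r' ≤ z r := by
  unfold exchangeMatrix
  rw [Matrix.of_apply]
  split_ifs
  · rw [NNReal.finset_sup_mul, Finset.sup_le_iff]
    intro i _
    split_ifs with hgi
    · exact NNReal.div_mul_le_of_mul_le_mul (h i hgi)
    · simp
  · simp

theorem stmt10_general {d : ℕ} (C : Matrix (Fin d) (Fin d) ℝ≥0)
    (g : Fin d → Fin d → Prop) :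
    ∀ z : Fin d → ℝ≥0, (∀ i, 0 < z i) → (∀ i j, impactEdge C z i j ↔ g i j) →
      ∀ r, maxMul (exchangeMatrix (kleene C) g) z r ≤ z r := by
  intro z _ hG r
  exact maxMul_apply_le_iff.mpr fun r' =>
    exchangeMatrix_mul_le fun i hir => ((hG i r).mpr hir).mul_le r'

/-- If `g` is an impact graph with positive probability, with impact exchange matrix `M`,
then for every innovation vector `z` in the event `{G(z) = g}` we have `M ⊙ z_R ≤ z_R`
entrywise on the root set `R` (the exchange matrix is padded by zeros off `R`). -/
theorem stmt10 {d : ℕ} (C : Matrix (Fin d) (Fin d) ℝ≥0) (hC : SupportAcyclic C)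
    {Ω : Type*} [MeasurableSpace Ω] (μ : Measure Ω) [IsProbabilityMeasure μ]
    (Z : Fin d → Ω → ℝ≥0) (hmeas : ∀ i, Measurable (Z i))
    (hindep : iIndepFun Z μ)
    (hpos : ∀ i ω, 0 < Z i ω)
    (hatom : ∀ i (c : ℝ≥0), μ {ω | Z i ω = c} = 0)
    (g : Fin d → Fin d → Prop)
    (hg : μ {ω | ∀ i j, impactEdge C (fun k => Z k ω) i j ↔ g i j} ≠ 0) :
    ∀ z : Fin d → ℝ≥0, (∀ i, 0 < z i) → (∀ i j, impactEdge C z i j ↔ g i j) →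
      ∀ r, maxMul (exchangeMatrix (kleene C) g) z r ≤ z r :=
  stmt10_general C g

end
end

section
/- Let $\bar C$ be the completion of $C$ with respect to a possible context $\{X_K=x_K\}$ (so $\bar c_{kh}=x_k/x_h$ for $k,h\in K^\ast$), and let $\bar C^\ast$ be the Kleene star of $\bar C$. Then for all $k,h\in K^\ast$ one has $\bar c^\ast_{kh}=\bar c_{kh}=x_k/x_h$. -/
open scoped NNReal

noncomputable section

/-- Weight of the directed cycle `c 0 → c 1 → ⋯ → c r → c 0`
(the edge `j → i` contributes the entry `A i j`). -/
def cycleWeight {d : ℕ} (A : Matrix (Fin d) (Fin d) ℝ≥0) {r : ℕ}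
    (c : Fin (r + 1) → Fin d) : ℝ≥0 :=
  ∏ t, A (c (t + 1)) (c t)

/-- Maximum cycle mean: the supremum of the geometric means of the weights of
(simple) directed cycles of the digraph of `A`; it is `0` when this digraph is acyclic. -/
noncomputable def maxCycleMean {d : ℕ} (A : Matrix (Fin d) (Fin d) ℝ≥0) : ℝ≥0 :=
  sSup {m | ∃ (r : ℕ) (c : Fin (r + 1) → Fin d),
    Function.Injective c ∧ m = cycleWeight A c ^ (((r : ℝ) + 1)⁻¹)}

/-- The completion of `C` with respect to a context with constant-node set `Ks` and constant
values `x`: `c̄_{ij} = x i / x j` if `i, j ∈ Ks`, and `c̄_{ij} = c_{ij}` otherwise. -/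
def completionMatrix {d : ℕ} (C : Matrix (Fin d) (Fin d) ℝ≥0) (Ks : Finset (Fin d))
    (x : Fin d → ℝ≥0) : Matrix (Fin d) (Fin d) ℝ≥0 :=
  Matrix.of fun i j => if i ∈ Ks ∧ j ∈ Ks then x i / x j else C i j

/-! The lower bound `c̄_{kh} ≤ c̄*_{kh}` is immediate. For the upper bound, the vector
`w i = max_{l ∈ K} c*_{il} x_l` is a max-times subeigenvector of `C̄`, i.e. `c̄_{ij} w_j ≤ w_i`:
feasibility of the context gives `w = x` on `K`, so on `K × K` this is `(x_i / x_j) x_j = x_i`,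
and elsewhere it is `C ⊙ C* ≤ C*`, which holds because acyclicity of `C` forces `C^{⊙d} = 0`
(a walk of length `d` would revisit a node). A subeigenvector of `C̄` is one of every power of
`C̄`, hence of `C̄*`, and evaluating at `k, h` gives `c̄*_{kh} x_h ≤ x_k`. -/

section MaxTimes

variable {d : ℕ}

lemma maxPow_zero_apply (A : Matrix (Fin d) (Fin d) ℝ≥0) (i j : Fin d) :
    maxPow A 0 i j = if i = j then 1 else 0 := rfl

lemma maxPow_succ_apply (A : Matrix (Fin d) (Fin d) ℝ≥0) (n : ℕ) (i j : Fin d) :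
    maxPow A (n + 1) i j = Finset.univ.sup fun l => A i l * maxPow A n l j := rfl

lemma kleene_apply (A : Matrix (Fin d) (Fin d) ℝ≥0) (i j : Fin d) :
    kleene A i j = (Finset.range d).sup fun n => maxPow A n i j := rfl

lemma maxPow_le_kleene (A : Matrix (Fin d) (Fin d) ℝ≥0) {n : ℕ} (hn : n < d) (i j : Fin d) :
    maxPow A n i j ≤ kleene A i j :=
  Finset.le_sup (f := fun n => maxPow A n i j) (Finset.mem_range.mpr hn)

lemma one_le_kleene_self (A : Matrix (Fin d) (Fin d) ℝ≥0) (i : Fin d) : 1 ≤ kleene A i i := by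
  simpa [maxPow_zero_apply] using maxPow_le_kleene A i.pos i i

lemma le_kleene_of_ne (A : Matrix (Fin d) (Fin d) ℝ≥0) {i j : Fin d} (hij : i ≠ j) :
    A i j ≤ kleene A i j := by
  have hd : 1 < d := by simpa using Fintype.one_lt_card_iff.mpr ⟨i, j, hij⟩
  calc A i j = A i j * maxPow A 0 j j := by simp [maxPow_zero_apply]
    _ ≤ maxPow A 1 i j := Finset.le_sup (f := fun l => A i l * maxPow A 0 l j) (Finset.mem_univ j)
    _ ≤ kleene A i j := maxPow_le_kleene A hd i j

lemma maxPow_mul_le_of_mul_le (A : Matrix (Fin d) (Fin d) ℝ≥0) {v : Fin d → ℝ≥0}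
    (hv : ∀ i j, A i j * v j ≤ v i) (n : ℕ) (i j : Fin d) : maxPow A n i j * v j ≤ v i := by
  induction n generalizing i with
  | zero =>
    rw [maxPow_zero_apply]
    split_ifs with hij
    · simp [hij]
    · simp
  | succ n ih =>
    rw [maxPow_succ_apply, NNReal.finset_sup_mul, Finset.sup_le_iff]
    intro l _
    calc A i l * maxPow A n l j * v j = A i l * (maxPow A n l j * v j) := mul_assoc _ _ _
      _ ≤ A i l * v l := by gcongr; exact ih l
      _ ≤ v i := hv i l

lemma kleene_mul_le_of_mul_le (A : Matrix (Fin d) (Fin d) ℝ≥0) {v : Fin d → ℝ≥0}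
    (hv : ∀ i j, A i j * v j ≤ v i) (i j : Fin d) : kleene A i j * v j ≤ v i := by
  rw [kleene_apply, NNReal.finset_sup_mul, Finset.sup_le_iff]
  exact fun n _ => maxPow_mul_le_of_mul_le A hv n i j

end MaxTimes

section Acyclic

variable {d : ℕ} {C : Matrix (Fin d) (Fin d) ℝ≥0}

lemma exists_walk_of_maxPow_ne_zero {n : ℕ} {i j : Fin d} (h : maxPow C n i j ≠ 0) :
    ∃ p : ℕ → Fin d, p 0 = j ∧ p n = i ∧ ∀ t < n, C (p (t + 1)) (p t) ≠ 0 := by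
  induction n generalizing i with
  | zero =>
    have hij : i = j := by by_contra hij; simp [maxPow_zero_apply, hij] at h
    exact ⟨fun _ => j, rfl, hij.symm, by simp⟩
  | succ n ih =>
    obtain ⟨l, -, hsup⟩ := Finset.exists_mem_eq_sup Finset.univ ⟨i, Finset.mem_univ i⟩
      fun l => C i l * maxPow C n l j
    have hl : C i l * maxPow C n l j ≠ 0 := by rwa [← hsup]
    obtain ⟨p, hp0, hpn, hp⟩ := ih (right_ne_zero_of_mul hl)
    refine ⟨Function.update p (n + 1) i, by simp [hp0], by simp, fun t ht => ?_⟩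
    rcases (Nat.lt_succ_iff.mp ht).lt_or_eq with ht | rfl
    · simpa [Function.update_of_ne (by omega : t + 1 ≠ n + 1),
        Function.update_of_ne (by omega : t ≠ n + 1)] using hp t ht
    · simpa [hpn] using left_ne_zero_of_mul hl

lemma SupportAcyclic.walk_apply_ne (hC : SupportAcyclic C) {n : ℕ} {p : ℕ → Fin d}
    (hp : ∀ t < n, C (p (t + 1)) (p t) ≠ 0) {a b : ℕ} (hab : a < b) (hb : b ≤ n) :
    p a ≠ p b := by
  obtain ⟨r, rfl⟩ : ∃ r, b = a + r + 1 := ⟨b - a - 1, by omega⟩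
  induction r using Nat.strong_induction_on generalizing a with
  | _ r ih =>
  intro hcycle
  -- a revisit at minimal distance `r + 1` traces a simple cycle
  refine hC ⟨r, fun t => p (a + t), fun s t hst => ?_, fun t => ?_⟩
  · by_contra hne
    rcases Nat.lt_or_gt_of_ne (Fin.val_ne_of_ne hne) with h | h
    · exact ih (t - s - 1) (by omega) (a := a + s) (by omega) (by omega)
        (by rwa [show a + s + (t - s - 1) + 1 = a + t by omega])
    · exact ih (s - t - 1) (by omega) (a := a + t) (by omega) (by omega)
        (by rw [show a + t + (s - t - 1) + 1 = a + s by omega]; exact hst.symm)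
  · simp only [Fin.val_add_one]
    split_ifs with ht
    · rw [ht, Fin.val_last, add_zero, hcycle]
      exact hp (a + r) (by omega)
    · have := Fin.val_lt_last ht
      exact hp (a + t) (by omega)

lemma SupportAcyclic.maxPow_eq_zero (hC : SupportAcyclic C) (i j : Fin d) :
    maxPow C d i j = 0 := by
  by_contra h
  obtain ⟨p, -, -, hp⟩ := exists_walk_of_maxPow_ne_zero h
  have hinj : Set.InjOn p (Finset.range (d + 1)) := by
    intro a ha b hb hab
    simp only [Finset.coe_range, Set.mem_Iio] at ha hb
    by_contra hne
    rcases Nat.lt_or_gt_of_ne hne with h | h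
    exacts [hC.walk_apply_ne hp h (by omega) hab, hC.walk_apply_ne hp h (by omega) hab.symm]
  simpa using Finset.card_le_card_of_injOn p (fun _ _ => Finset.mem_coe.mpr (Finset.mem_univ _))
    hinj

lemma SupportAcyclic.mul_kleene_le (hC : SupportAcyclic C) (i j l : Fin d) :
    C i j * kleene C j l ≤ kleene C i l := by
  rw [kleene_apply, NNReal.mul_finset_sup, Finset.sup_le_iff]
  intro n hn
  have hstep : C i j * maxPow C n j l ≤ maxPow C (n + 1) i l :=
    Finset.le_sup (f := fun m => C i m * maxPow C n m l) (Finset.mem_univ j)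
  have hnd : n + 1 ≤ d := Finset.mem_range.mp hn
  rcases hnd.lt_or_eq with hlt | heq
  · exact hstep.trans (maxPow_le_kleene C hlt i l)
  · rw [heq, hC.maxPow_eq_zero] at hstep
    exact hstep.trans zero_le

lemma SupportAcyclic.mul_sup_kleene_mul_le (hC : SupportAcyclic C) (s : Finset (Fin d))
    (y : Fin d → ℝ≥0) (i j : Fin d) :
    C i j * s.sup (fun l => kleene C j l * y l) ≤ s.sup (fun l => kleene C i l * y l) := by
  rw [NNReal.mul_finset_sup]
  refine Finset.sup_mono_fun fun l _ => ?_
  rw [← mul_assoc]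
  gcongr
  exact hC.mul_kleene_le i j l

end Acyclic

section Completion

variable {d : ℕ} {C : Matrix (Fin d) (Fin d) ℝ≥0} {Ks : Finset (Fin d)} {x : Fin d → ℝ≥0}

lemma sup_kleene_mul_eq_of_mem (hfeas : ∀ r ∈ Ks, ∀ l ∈ Ks, kleene C r l * x l ≤ x r)
    {i : Fin d} (hi : i ∈ Ks) : Ks.sup (fun l => kleene C i l * x l) = x i :=
  le_antisymm (Finset.sup_le (hfeas i hi))
    (Finset.le_sup_of_le hi (le_mul_of_one_le_left zero_le (one_le_kleene_self C i)))

lemma completionMatrix_mul_sup_kleene_mul_le (hC : SupportAcyclic C)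
    (hx : ∀ k ∈ Ks, 0 < x k) (hfeas : ∀ r ∈ Ks, ∀ l ∈ Ks, kleene C r l * x l ≤ x r)
    (i j : Fin d) :
    completionMatrix C Ks x i j * Ks.sup (fun l => kleene C j l * x l) ≤
      Ks.sup (fun l => kleene C i l * x l) := by
  by_cases hij : i ∈ Ks ∧ j ∈ Ks
  · rw [completionMatrix, Matrix.of_apply, if_pos hij, sup_kleene_mul_eq_of_mem hfeas hij.1,
      sup_kleene_mul_eq_of_mem hfeas hij.2, div_mul_cancel₀ _ (hx j hij.2).ne']
  · rw [completionMatrix, Matrix.of_apply, if_neg hij]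
    exact hC.mul_sup_kleene_mul_le Ks x i j

end Completion

theorem stmt16_general {d : ℕ} (C : Matrix (Fin d) (Fin d) ℝ≥0) (hC : SupportAcyclic C)
    (Ks : Finset (Fin d)) (x : Fin d → ℝ≥0)
    (hx : ∀ k ∈ Ks, 0 < x k)
    (hfeas : ∀ r ∈ Ks, ∀ l ∈ Ks, kleene C r l * x l ≤ x r)
    (k h : Fin d) (hk : k ∈ Ks) (hh : h ∈ Ks) :
    kleene (completionMatrix C Ks x) k h = completionMatrix C Ks x k h ∧
    kleene (completionMatrix C Ks x) k h = x k / x h := by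
  set B := completionMatrix C Ks x
  have hBkh : B k h = x k / x h := by simp [B, completionMatrix, hk, hh]
  have hupper : kleene B k h ≤ x k / x h := by
    have := kleene_mul_le_of_mul_le B (completionMatrix_mul_sup_kleene_mul_le hC hx hfeas) k h
    rwa [sup_kleene_mul_eq_of_mem hfeas hk, sup_kleene_mul_eq_of_mem hfeas hh,
      ← le_div_iff₀ (hx h hh)] at this
  have hlower : B k h ≤ kleene B k h := by
    rcases eq_or_ne k h with rfl | hne
    · rw [hBkh, div_self (hx k hk).ne']
      exact one_le_kleene_self B k
    · exact le_kleene_of_ne B hne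
  have heq : kleene B k h = x k / x h := le_antisymm hupper (hBkh ▸ hlower)
  exact ⟨heq.trans hBkh.symm, heq⟩

/-- For the completion `C̄` of `C` with respect to a possible context, the Kleene star of `C̄`
agrees with `C̄` on the constant nodes: `c̄^*_{kh} = c̄_{kh} = x k / x h` for `k, h ∈ Ks`. -/
theorem stmt16 {d : ℕ} (C : Matrix (Fin d) (Fin d) ℝ≥0) (hC : SupportAcyclic C)
    (Ks : Finset (Fin d)) (x : Fin d → ℝ≥0) (hKs : Ks.Nonempty)
    (hx : ∀ k ∈ Ks, 0 < x k)
    (hfeas : ∀ r ∈ Ks, ∀ l ∈ Ks, kleene C r l * x l ≤ x r)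
    (k h : Fin d) (hk : k ∈ Ks) (hh : h ∈ Ks) :
    kleene (completionMatrix C Ks x) k h = completionMatrix C Ks x k h ∧
    kleene (completionMatrix C Ks x) k h = x k / x h :=
  stmt16_general C hC Ks x hx hfeas k h hk hh

end
end
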